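/- Let G be a finite group that is a product G = H₁H₂⋯Hₙ (n ≥ 4) of mutually permuting subgroups Hᵢ (HᵢHⱼ = HⱼHᵢ for all i,j) such that no proper subset of {H₁,…,Hₙ} generates G. Then the factorization graph of G contains an induced 4-cycle; explicitly, with K = H₅⋯Hₙ, the subgroups H₁H₂K, H₃H₄K, H₁H₂H₃K, H₁H₃H₄K induce a 4-cycle in F(G). -/

import Mathlib

/-!
Because the factors permute, the set product of two joins `H_S = ⨆ i ∈ S, H i` and `H_T` is
already the subgroup `H_{S ∪ T}`, and irredundancy makes `S ↦ H_S` injective with `H_S = G` only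
for `S = univ`. The four subgroups are `H_{Mᶜ}` for the sets `M = {3, 4}, {1, 2}, {4}, {2}` of
omitted factors (numbered as `H₁, …, Hₙ`), so two of them are adjacent exactly when their omitted
sets are disjoint: true along the square, false across its diagonals. A vertex is not contained
in `Φ(G)` since it supplements a proper subgroup, its successor in the square.
-/

open scoped Pointwise

namespace Subgroup

variable {G : Type*} [Group G]

def Permutable (X Y : Subgroup G) : Prop :=
  (X : Set G) * (Y : Set G) = (Y : Set G) * (X : Set G)

variable {X Y Z : Subgroup G}

theorem Permutable.symm (h : X.Permutable Y) : Y.Permutable X :=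
  Eq.symm h

theorem Permutable.coe_sup (h : X.Permutable Y) :
    ((X ⊔ Y : Subgroup G) : Set G) = (X : Set G) * (Y : Set G) := by
  have mul_self : ((X : Set G) * Y) * (X * Y) = X * Y :=
    calc ((X : Set G) * Y) * (X * Y) = X * (Y * X) * Y := by simp only [mul_assoc]
      _ = X * (X * Y) * Y := by rw [h]
      _ = (X * X) * (Y * Y) := by simp only [mul_assoc]
      _ = X * Y := by rw [coe_mul_coe, coe_mul_coe]
  have inv_self : ((X : Set G) * Y)⁻¹ = X * Y := by
    rw [mul_inv_rev, inv_coe_set, inv_coe_set, h]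
  let XY : Subgroup G :=
    { carrier := X * Y
      one_mem' := ⟨1, X.one_mem, 1, Y.one_mem, one_mul 1⟩
      mul_mem' := fun ha hb => mul_self ▸ Set.mul_mem_mul ha hb
      inv_mem' := fun ha => inv_self ▸ Set.inv_mem_inv.2 ha }
  refine le_antisymm (show X ⊔ Y ≤ XY from sup_le ?_ ?_) ?_
  · exact fun x hx => ⟨x, hx, 1, Y.one_mem, mul_one x⟩
  · exact fun y hy => ⟨1, X.one_mem, y, hy, one_mul y⟩
  · rintro _ ⟨x, hx, y, hy, rfl⟩
    exact mul_mem_sup hx hy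

theorem Permutable.sup_right (hXY : X.Permutable Y) (hXZ : X.Permutable Z)
    (hYZ : Y.Permutable Z) : X.Permutable (Y ⊔ Z) := by
  rw [Permutable, hYZ.coe_sup]
  calc (X : Set G) * ((Y : Set G) * Z) = Y * (X * Z) := by rw [← mul_assoc, hXY, mul_assoc]
    _ = Y * Z * X := by rw [hXZ, mul_assoc]

theorem sup_eq_top_of_mul_eq_univ (h : (X : Set G) * (Y : Set G) = Set.univ) : X ⊔ Y = ⊤ := by
  rw [sup_eq_closure_mul, h, closure_univ]

theorem ne_of_mul_eq_univ (h : (X : Set G) * (Y : Set G) = Set.univ) (hY : Y ≠ ⊤) : X ≠ Y := by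
  rintro rfl
  exact hY (coe_eq_univ.1 (coe_mul_coe X ▸ h))

theorem not_le_frattini_of_mul_eq_univ [IsCoatomic (Subgroup G)]
    (h : (X : Set G) * (Y : Set G) = Set.univ) (hY : Y ≠ ⊤) : ¬ X ≤ frattini G := fun hX =>
  hY <| frattini_nongenerating <| top_unique <|
    (sup_eq_top_of_mul_eq_univ h).ge.trans (sup_comm X Y ▸ sup_le_sup_left hX Y)

def IsFactorizationVertex (X : Subgroup G) : Prop :=
  X ≠ ⊤ ∧ ¬ X ≤ frattini G

/-- `A - B - C - D - A` is an induced 4-cycle of the factorization graph of `G`. -/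
def IsInducedSquare (A B C D : Subgroup G) : Prop :=
  A.IsFactorizationVertex ∧ B.IsFactorizationVertex ∧
    C.IsFactorizationVertex ∧ D.IsFactorizationVertex ∧
    A ≠ B ∧ A ≠ C ∧ A ≠ D ∧ B ≠ C ∧ B ≠ D ∧ C ≠ D ∧
    (A : Set G) * (B : Set G) = Set.univ ∧ (B : Set G) * (C : Set G) = Set.univ ∧
    (C : Set G) * (D : Set G) = Set.univ ∧ (D : Set G) * (A : Set G) = Set.univ ∧
    (A : Set G) * (C : Set G) ≠ Set.univ ∧ (B : Set G) * (D : Set G) ≠ Set.univ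

variable {ι : Type*} {H : ι → Subgroup G}

theorem permutable_biSup_right (hH : ∀ i j, (H i).Permutable (H j))
    (hX : ∀ i, X.Permutable (H i)) (S : Finset ι) : X.Permutable (⨆ i ∈ S, H i) := by
  classical
  induction S using Finset.induction_on generalizing X with
  | empty => simp [Permutable]
  | insert a S _ ih =>
    rw [Finset.iSup_insert]
    exact (hX a).sup_right (ih hX) (ih (hH a))

theorem permutable_biSup_biSup (hH : ∀ i j, (H i).Permutable (H j)) (S T : Finset ι) :
    (⨆ i ∈ S, H i).Permutable (⨆ i ∈ T, H i) :=
  permutable_biSup_right hH (fun i => (permutable_biSup_right hH (hH i) S).symm) T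

theorem coe_biSup_mul_coe_biSup [DecidableEq ι] (hH : ∀ i j, (H i).Permutable (H j))
    (S T : Finset ι) :
    ((⨆ i ∈ S, H i : Subgroup G) : Set G) * ((⨆ i ∈ T, H i : Subgroup G) : Set G) =
      ((⨆ i ∈ S ∪ T, H i : Subgroup G) : Set G) := by
  rw [Finset.iSup_union, (permutable_biSup_biSup hH S T).coe_sup]

section Irredundant

variable [Fintype ι]

theorem biSup_eq_top_iff (hprod : ⨆ i, H i = ⊤)
    (hmin : ∀ S : Finset ι, S ≠ Finset.univ → ⨆ i ∈ S, H i ≠ ⊤) (S : Finset ι) :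
    ⨆ i ∈ S, H i = ⊤ ↔ S = Finset.univ :=
  ⟨not_imp_not.1 (hmin S), by rintro rfl; simpa using hprod⟩

variable [DecidableEq ι]

theorem biSup_le_biSup_iff (htop : ∀ S : Finset ι, ⨆ i ∈ S, H i = ⊤ ↔ S = Finset.univ)
    {S T : Finset ι} :
    ⨆ i ∈ S, H i ≤ ⨆ i ∈ T, H i ↔ S ⊆ T := by
  refine ⟨fun h => ?_, fun h => biSup_mono fun i hi => h hi⟩
  have : T ∪ Sᶜ = Finset.univ := by
    rw [← htop, Finset.iSup_union, eq_top_iff, ← (htop _).2 (Finset.union_compl S),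
      Finset.iSup_union]
    exact sup_le_sup_right h _
  simpa using codisjoint_iff_compl_le_left.1 (codisjoint_iff.2 this)

theorem biSup_injective (htop : ∀ S : Finset ι, ⨆ i ∈ S, H i = ⊤ ↔ S = Finset.univ) :
    Function.Injective fun S : Finset ι => ⨆ i ∈ S, H i :=
  fun _ _ h => subset_antisymm ((biSup_le_biSup_iff htop).1 h.le)
    ((biSup_le_biSup_iff htop).1 h.ge)

theorem coe_biSup_mul_coe_biSup_eq_univ_iff
    (htop : ∀ S : Finset ι, ⨆ i ∈ S, H i = ⊤ ↔ S = Finset.univ)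
    (hH : ∀ i j, (H i).Permutable (H j)) {S T : Finset ι} :
    ((⨆ i ∈ S, H i : Subgroup G) : Set G) * ((⨆ i ∈ T, H i : Subgroup G) : Set G) = Set.univ ↔
      S ∪ T = Finset.univ := by
  rw [coe_biSup_mul_coe_biSup hH, coe_eq_univ, htop]

theorem isInducedSquare_biSup_compl [IsCoatomic (Subgroup G)]
    (htop : ∀ S : Finset ι, ⨆ i ∈ S, H i = ⊤ ↔ S = Finset.univ)
    (hH : ∀ i j, (H i).Permutable (H j))
    {p q r s : ι} (hpq : p ≠ q) (hpr : p ≠ r) (hps : p ≠ s) (hqr : q ≠ r) (hqs : q ≠ s)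
    (hrs : r ≠ s) :
    IsInducedSquare (⨆ i ∈ ({r, s} : Finset ι)ᶜ, H i) (⨆ i ∈ ({p, q} : Finset ι)ᶜ, H i)
      (⨆ i ∈ ({s} : Finset ι)ᶜ, H i) (⨆ i ∈ ({q} : Finset ι)ᶜ, H i) := by
  have proper (M : Finset ι) (hM : M.Nonempty) : ⨆ i ∈ Mᶜ, H i ≠ ⊤ := by
    rw [Ne, htop, Finset.compl_eq_univ_iff]
    exact hM.ne_empty
  have adj_iff (M N : Finset ι) :
      ((⨆ i ∈ Mᶜ, H i : Subgroup G) : Set G) * ((⨆ i ∈ Nᶜ, H i : Subgroup G) : Set G) =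
        Set.univ ↔ Disjoint M N := by
    rw [coe_biSup_mul_coe_biSup_eq_univ_iff htop hH, ← Finset.compl_inter,
      Finset.compl_eq_univ_iff, Finset.disjoint_iff_inter_eq_empty]
  have hAB := (adj_iff _ _).2 (by simp [hpr, hps, hqr, hqs] : Disjoint {r, s} {p, q})
  have hBC := (adj_iff _ _).2 (by simp [hps.symm, hqs.symm] : Disjoint {p, q} {s})
  have hCD := (adj_iff _ _).2 (by simp [hqs.symm] : Disjoint {s} {q})
  have hDA := (adj_iff _ _).2 (by simp [hqr, hqs] : Disjoint {q} {r, s})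
  have hA := proper {r, s} (by simp)
  have hB := proper {p, q} (by simp)
  have hC := proper {s} (by simp)
  have hD := proper {q} (by simp)
  have hAC : ({r, s} : Finset ι) ≠ {s} :=
    ne_of_mem_of_not_mem' (Finset.mem_insert_self r _) (by simpa using hrs)
  have hBD : ({p, q} : Finset ι) ≠ {q} :=
    ne_of_mem_of_not_mem' (Finset.mem_insert_self p _) (by simpa using hpq)
  exact ⟨⟨hA, not_le_frattini_of_mul_eq_univ hAB hB⟩, ⟨hB, not_le_frattini_of_mul_eq_univ hBC hC⟩,
    ⟨hC, not_le_frattini_of_mul_eq_univ hCD hD⟩, ⟨hD, not_le_frattini_of_mul_eq_univ hDA hA⟩,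
    ne_of_mul_eq_univ hAB hB, (biSup_injective htop).ne (compl_injective.ne hAC),
    (ne_of_mul_eq_univ hDA hA).symm, ne_of_mul_eq_univ hBC hC,
    (biSup_injective htop).ne (compl_injective.ne hBD), ne_of_mul_eq_univ hCD hD,
    hAB, hBC, hCD, hDA, (adj_iff _ _).not.2 (by simp), (adj_iff _ _).not.2 (by simp)⟩

theorem isInducedSquare_of_ne [IsCoatomic (Subgroup G)]
    (htop : ∀ S : Finset ι, ⨆ i ∈ S, H i = ⊤ ↔ S = Finset.univ)
    (hH : ∀ i j, (H i).Permutable (H j))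
    {p q r s : ι} (hpq : p ≠ q) (hpr : p ≠ r) (hps : p ≠ s) (hqr : q ≠ r) (hqs : q ≠ s)
    (hrs : r ≠ s) (K : Subgroup G) (hK : K = ⨆ i ∈ ({p, q, r, s} : Finset ι)ᶜ, H i)
    (A B C D : Subgroup G) (hA : A = H p ⊔ H q ⊔ K) (hB : B = H r ⊔ H s ⊔ K)
    (hC : C = H p ⊔ H q ⊔ H r ⊔ K) (hD : D = H p ⊔ H r ⊔ H s ⊔ K) :
    IsInducedSquare A B C D := by
  subst hK hA hB hC hD
  simp only [sup_assoc, ← Finset.iSup_insert]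
  convert isInducedSquare_biSup_compl htop hH hpq hpr hps hqr hqs hrs using 1 <;>
    refine congrArg (fun S => ⨆ i ∈ S, H i) (Finset.ext fun i => ?_) <;>
    simp only [Finset.mem_insert, Finset.mem_compl, Finset.mem_singleton] <;> grind

end Irredundant

end Subgroup

theorem induced_square_of_mutually_permuting_product
    (G : Type*) [Group G] [Finite G] (n : ℕ) (hn : 4 ≤ n)
    (H : Fin n → Subgroup G)
    (hperm : ∀ i j, (H i : Set G) * (H j : Set G) = (H j : Set G) * (H i : Set G))
    (hprod : (⨆ i, H i) = ⊤)
    (hmin : ∀ S : Finset (Fin n), S ≠ Finset.univ → (⨆ i ∈ S, H i) ≠ ⊤) :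
    ∀ K : Subgroup G, K = (⨆ i : Fin n, ⨆ _ : 4 ≤ (i : ℕ), H i) →
    ∀ A B C D : Subgroup G,
      A = H ⟨0, by omega⟩ ⊔ H ⟨1, by omega⟩ ⊔ K →
      B = H ⟨2, by omega⟩ ⊔ H ⟨3, by omega⟩ ⊔ K →
      C = H ⟨0, by omega⟩ ⊔ H ⟨1, by omega⟩ ⊔ H ⟨2, by omega⟩ ⊔ K →
      D = H ⟨0, by omega⟩ ⊔ H ⟨2, by omega⟩ ⊔ H ⟨3, by omega⟩ ⊔ K →
      (A ≠ ⊤ ∧ ¬ A ≤ frattini G) ∧ (B ≠ ⊤ ∧ ¬ B ≤ frattini G) ∧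
      (C ≠ ⊤ ∧ ¬ C ≤ frattini G) ∧ (D ≠ ⊤ ∧ ¬ D ≤ frattini G) ∧
      A ≠ B ∧ A ≠ C ∧ A ≠ D ∧ B ≠ C ∧ B ≠ D ∧ C ≠ D ∧
      (A : Set G) * (B : Set G) = Set.univ ∧ (B : Set G) * (C : Set G) = Set.univ ∧
      (C : Set G) * (D : Set G) = Set.univ ∧ (D : Set G) * (A : Set G) = Set.univ ∧
      (A : Set G) * (C : Set G) ≠ Set.univ ∧ (B : Set G) * (D : Set G) ≠ Set.univ := by
  intro K hK A B C D hA hB hC hD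
  have hK' : K = ⨆ i ∈ ({⟨0, by omega⟩, ⟨1, by omega⟩, ⟨2, by omega⟩, ⟨3, by omega⟩} :
      Finset (Fin n))ᶜ, H i :=
    hK.trans <| iSup_congr fun i => iSup_congr_Prop (by
      simp only [Finset.mem_compl, Finset.mem_insert, Finset.mem_singleton, Fin.ext_iff]
      omega) fun _ => rfl
  exact Subgroup.isInducedSquare_of_ne (Subgroup.biSup_eq_top_iff hprod hmin) hperm
    (by simp) (by simp) (by simp) (by simp) (by simp) (by simp) K hK' A B C D hA hB hC hD
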